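/- arXiv:1703.08433 — 2 statements merged into one kernel-verified Lean document; each statement's English description precedes it below -/
import Mathlib

section
/- For any metric d on {1,...,n} and any permutation π of {1,...,n}, the sum over i from 1 to ⌊n/2⌋ of d(π(2i-1), π(2i)) is at most n·r̄, where r̄ is the average distance (1/n²)·∑_{x,y} d(x,y). -/
open Finset

/-- Sum over i = 1..⌊n/2⌋ of d(π(2i-1), π(2i)), with 0-indexed points. -/
def matchingSum (n : ℕ) (d : Fin n → Fin n → ℝ) (π : Equiv.Perm (Fin n)) : ℝ :=
  ∑ i : Fin (n / 2),
    d (π ⟨2 * i.val, by have := i.isLt; omega⟩) (π ⟨2 * i.val + 1, by have := i.isLt; omega⟩)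

theorem stmt2 (n : ℕ) (d : Fin n → Fin n → ℝ)
    (hnn : ∀ x y, 0 ≤ d x y)
    (hid : ∀ x y, d x y = 0 ↔ x = y)
    (hsymm : ∀ x y, d x y = d y x)
    (htri : ∀ x y z, d x z ≤ d x y + d y z)
    (π : Equiv.Perm (Fin n))
    (rbar : ℝ) (hrbar : rbar = (1 / (n : ℝ) ^ 2) * ∑ x : Fin n, ∑ y : Fin n, d x y) :
    matchingSum n d π ≤ (n : ℝ) * rbar := by
  rcases Nat.eq_zero_or_pos n with h0 | hn
  · subst h0
    simp [matchingSum, hrbar]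
  have hnR : (0:ℝ) < n := by exact_mod_cast hn
  set a : Fin (n/2) → Fin n := fun i => π ⟨2 * i.val, by have := i.isLt; omega⟩ with ha
  set b : Fin (n/2) → Fin n := fun i => π ⟨2 * i.val + 1, by have := i.isLt; omega⟩ with hb
  have hmatch : matchingSum n d π = ∑ i, d (a i) (b i) := rfl
  set g : Fin (n/2) ⊕ Fin (n/2) → Fin n := Sum.elim a b with hg
  have hginj : Function.Injective g := by
    rintro (i | i) (j | j) h <;>
      simp only [hg, ha, hb, Sum.elim_inl, Sum.elim_inr] at h <;>
      have h2 := π.injective h <;>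
      rw [Fin.mk.injEq] at h2
    · exact congrArg Sum.inl (Fin.ext (by omega))
    · exact absurd h2 (by omega)
    · exact absurd h2 (by omega)
    · exact congrArg Sum.inr (Fin.ext (by omega))
  set S := ∑ x : Fin n, ∑ y : Fin n, d x y with hS
  have key : (n:ℝ) * matchingSum n d π ≤ S := by
    rw [hmatch, Finset.mul_sum]
    calc ∑ i, (n:ℝ) * d (a i) (b i)
        ≤ ∑ i, ∑ z : Fin n, (d (a i) z + d z (b i)) := by
          apply Finset.sum_le_sum
          intro i _
          have h3 : (n:ℝ) * d (a i) (b i) = ∑ _z : Fin n, d (a i) (b i) := by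
            simp [Finset.sum_const, mul_comm]
          rw [h3]
          exact Finset.sum_le_sum fun z _ => htri _ z _
      _ = ∑ z : Fin n, ∑ i, (d (a i) z + d z (b i)) := Finset.sum_comm
      _ ≤ ∑ z : Fin n, ∑ x : Fin n, d x z := by
          apply Finset.sum_le_sum
          intro z _
          have h1 : ∑ i, (d (a i) z + d z (b i)) = ∑ p : Fin (n/2) ⊕ Fin (n/2), d (g p) z := by
            rw [Fintype.sum_sum_type, ← Finset.sum_add_distrib]
            apply Finset.sum_congr rfl
            intro i _
            simp only [hg, Sum.elim_inl, Sum.elim_inr]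
            rw [hsymm z (b i)]
          rw [h1, ← Finset.sum_image (g := g) (f := fun x => d x z)
            (fun x _ y _ h => hginj h)]
          exact Finset.sum_le_sum_of_subset_of_nonneg (Finset.subset_univ _)
            (fun x _ _ => hnn x z)
      _ = S := by rw [hS, Finset.sum_comm]
  rw [hrbar]
  have h4 : (n:ℝ) * (1 / (n:ℝ)^2 * S) = S / n := by field_simp
  rw [h4, le_div_iff₀ hnR]
  linarith [key]
end

section
/- Let π be a uniformly random permutation of {1,...,n} (n ≥ 4), S = ∑_{i=1}^{⌊n/2⌋} d(π(2i-1), π(2i)), and suppose the diameter Δ = max_{x,y} d(x,y) satisfies Δ ≤ δ·n·r for some δ > 0, where r = (1/n)·∑_x d(p*,x) for a 1-median p*. Then Var(S) ≤ C·(r̄²·n + δ·n²·r·r̄ + δ²·n·r²) for an absolute constant C (e.g., C = 10), where r̄ = (1/n²)·∑_{x,y} d(x,y). -/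
open Finset

/-- Expectation of `f` under a uniformly random permutation of `Fin n`. -/
noncomputable def permExp (n : ℕ) (f : Equiv.Perm (Fin n) → ℝ) : ℝ :=
  (∑ π : Equiv.Perm (Fin n), f π) / (Nat.factorial n : ℝ)

/-- Variance of `f` under a uniformly random permutation of `Fin n`. -/
noncomputable def permVar (n : ℕ) (f : Equiv.Perm (Fin n) → ℝ) : ℝ :=
  permExp n (fun π => (f π) ^ 2) - (permExp n f) ^ 2

/-!
A uniformly random permutation carries any fixed injective tuple of points to a uniformly random
injective tuple, since `Equiv.Perm α` acts transitively on `ι ↪ α`. So each matched pair is a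
uniform ordered pair of distinct points and two different matched pairs form a uniform injective
4-tuple. With `m = n / 2` and `P` the sum of `d` over ordered pairs of distinct points, this gives
`E S = m P / (n (n-1))` and `E S² = m E[d²] + m (m-1) E[d(x₀,x₁) d(x₂,x₃)]`. The diagonal part
is at most `m Δ E[d]` because `d ≤ Δ`; the off-diagonal part is at most
`m² P² / (n (n-1) (n-2) (n-3))`, which exceeds `(E S)²` only by a factor `1 + O(1/n)`,
leaving `O(n r̄²)`.
-/

section Pretransitive

variable {G X M : Type*} [Group G] [Fintype G] [MulAction G X] [MulAction.IsPretransitive G X]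
  [AddCommMonoid M]

theorem sum_smul_eq_of_isPretransitive (F : X → M) (x y : X) :
    ∑ g : G, F (g • x) = ∑ g : G, F (g • y) := by
  obtain ⟨h, rfl⟩ := MulAction.exists_smul_eq G y x
  exact Fintype.sum_equiv (Equiv.mulRight h) _ _ fun g => by simp [mul_smul]

theorem card_nsmul_sum_smul_of_isPretransitive [Fintype X] (F : X → M) (x : X) :
    Fintype.card X • ∑ g : G, F (g • x) = Fintype.card G • ∑ y, F y :=
  calc Fintype.card X • ∑ g : G, F (g • x)
      = ∑ y : X, ∑ g : G, F (g • y) := by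
        rw [← card_univ, ← sum_const]
        exact sum_congr rfl fun y _ => sum_smul_eq_of_isPretransitive F x y
    _ = ∑ g : G, ∑ y : X, F (g • y) := sum_comm
    _ = ∑ g : G, ∑ y, F y := sum_congr rfl fun g _ => Equiv.sum_comp (MulAction.toPerm g) F
    _ = Fintype.card G • ∑ y, F y := by rw [sum_const, card_univ]

end Pretransitive

instance Equiv.Perm.isPretransitive_embedding {ι α : Type*} [Finite ι] :
    MulAction.IsPretransitive (Equiv.Perm α) (ι ↪ α) :=
  ⟨Equiv.Perm.exists_smul_eq_embedding⟩

def pairDist {α : Type*} (d : α → α → ℝ) (g : Fin 2 ↪ α) : ℝ := d (g 0) (g 1)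

def pairDistProd {α : Type*} (d : α → α → ℝ) (g : Fin 2 ⊕ Fin 2 ↪ α) : ℝ :=
  pairDist d (.trans .inl g) * pairDist d (.trans .inr g)

theorem sum_embedding_sum_le_mul {ι κ α : Type*} [Fintype ι] [Fintype κ] [Fintype α]
    [DecidableEq ι] [DecidableEq κ] [DecidableEq α] {F : (ι ↪ α) → ℝ} {G : (κ ↪ α) → ℝ}
    (hF : 0 ≤ F) (hG : 0 ≤ G) :
    ∑ g : ι ⊕ κ ↪ α, F (.trans .inl g) * G (.trans .inr g) ≤ (∑ f, F f) * ∑ g, G g := by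
  let restrict : (ι ⊕ κ ↪ α) ↪ (ι ↪ α) × (κ ↪ α) :=
    ⟨fun g => (.trans .inl g, .trans .inr g), fun g g' h => by
      ext (i | k)
      · exact DFunLike.congr_fun (congrArg Prod.fst h) i
      · exact DFunLike.congr_fun (congrArg Prod.snd h) k⟩
  rw [sum_mul_sum, ← sum_product', univ_product_univ]
  calc ∑ g : ι ⊕ κ ↪ α, F (.trans .inl g) * G (.trans .inr g)
      = ∑ p ∈ univ.map restrict, F p.1 * G p.2 := by rw [sum_map]; rfl
    _ ≤ ∑ p : (ι ↪ α) × (κ ↪ α), F p.1 * G p.2 :=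
        sum_le_univ_sum_of_nonneg fun p => mul_nonneg (hF _) (hG _)

theorem sum_pairDist_le {α : Type*} [Fintype α] [DecidableEq α] {d : α → α → ℝ}
    (hd : ∀ x y, 0 ≤ d x y) : ∑ g : Fin 2 ↪ α, pairDist d g ≤ ∑ x, ∑ y, d x y := by
  let ends : (Fin 2 ↪ α) ↪ α × α :=
    ⟨fun g => (g 0, g 1), fun g g' h => by
      ext b
      fin_cases b
      · exact congrArg Prod.fst h
      · exact congrArg Prod.snd h⟩
  calc ∑ g : Fin 2 ↪ α, pairDist d g = ∑ p ∈ univ.map ends, d p.1 p.2 := by rw [sum_map]; rfl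
    _ ≤ ∑ p : α × α, d p.1 p.2 := sum_le_univ_sum_of_nonneg fun p => hd _ _
    _ = ∑ x, ∑ y, d x y := Fintype.sum_prod_type _

theorem card_embedding_fin_two (n : ℕ) :
    (Fintype.card (Fin 2 ↪ Fin n) : ℝ) = n * (n - 1) := by
  rw [Fintype.card_embedding_eq, Fintype.card_fin, Fintype.card_fin, Nat.cast_descFactorial_two]

theorem card_embedding_fin_two_sum_fin_two (n : ℕ) :
    (Fintype.card (Fin 2 ⊕ Fin 2 ↪ Fin n) : ℝ) = n * (n - 1) * (n - 2) * (n - 3) := by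
  rw [Fintype.card_embedding_eq, Fintype.card_sum, Fintype.card_fin, Fintype.card_fin,
    ← descPochhammer_eval_eq_descFactorial]
  simp [descPochhammer_succ_right]

noncomputable def embMean {ι : Type*} [Fintype ι] [DecidableEq ι] {n : ℕ}
    (F : (ι ↪ Fin n) → ℝ) : ℝ :=
  (∑ g, F g) / Fintype.card (ι ↪ Fin n)

theorem permExp_smul_embedding {ι : Type*} [Fintype ι] [DecidableEq ι] {n : ℕ}
    (F : (ι ↪ Fin n) → ℝ) (e : ι ↪ Fin n) :
    permExp n (fun π => F (π • e)) = embMean F := by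
  have : Nonempty (ι ↪ Fin n) := ⟨e⟩
  have hcard : (0 : ℝ) < Fintype.card (ι ↪ Fin n) := by exact_mod_cast Fintype.card_pos
  have key := card_nsmul_sum_smul_of_isPretransitive (G := Equiv.Perm (Fin n)) F e
  simp only [nsmul_eq_mul, Fintype.card_perm, Fintype.card_fin] at key
  rw [permExp, embMean, div_eq_div_iff (by positivity) hcard.ne']
  linarith

theorem permExp_sum {n : ℕ} {ι : Type*} (s : Finset ι) (f : ι → Equiv.Perm (Fin n) → ℝ) :
    permExp n (fun π => ∑ i ∈ s, f i π) = ∑ i ∈ s, permExp n (f i) := by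
  simp only [permExp, ← sum_div]
  rw [sum_comm]

def slot {n : ℕ} (i : Fin (n / 2)) : Fin 2 ↪ Fin n :=
  ⟨fun b => ⟨2 * i + b, by have := i.isLt; have := b.isLt; omega⟩, fun b c h => by
    simp only [Fin.mk.injEq, Nat.add_left_cancel_iff] at h; exact Fin.ext h⟩

theorem slot_val {n : ℕ} (i : Fin (n / 2)) (b : Fin 2) : (slot i b : ℕ) = 2 * i + b := rfl

def slotPair {n : ℕ} {i j : Fin (n / 2)} (h : i ≠ j) : Fin 2 ⊕ Fin 2 ↪ Fin n :=
  ⟨Sum.elim (slot i) (slot j), (slot i).injective.sumElim (slot j).injective fun b c hbc => h <| by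
    have := b.isLt; have := c.isLt; have := congrArg Fin.val hbc
    simp only [slot_val] at this
    exact Fin.ext (by omega)⟩

theorem matchingSum_eq_sum_pairDist {n : ℕ} (d : Fin n → Fin n → ℝ) :
    matchingSum n d = fun π => ∑ i, pairDist d (π • slot i) := rfl

section Moments

variable {n : ℕ} (d : Fin n → Fin n → ℝ)

theorem permExp_matchingSum :
    permExp n (matchingSum n d) = (n / 2 : ℕ) * embMean (pairDist d) := by
  simp only [matchingSum_eq_sum_pairDist, permExp_sum, permExp_smul_embedding, sum_const,
    card_univ, Fintype.card_fin, nsmul_eq_mul]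

theorem permExp_matchingSum_sq :
    permExp n (fun π => matchingSum n d π ^ 2)
      = (n / 2 : ℕ) * embMean (fun g => pairDist d g ^ 2)
        + (n / 2 : ℕ) * ((n / 2 : ℕ) - 1) * embMean (pairDistProd d) := by
  set a := embMean (fun g => pairDist d g ^ 2)
  set b := embMean (pairDistProd d)
  have hterm (i j : Fin (n / 2)) :
      permExp n (fun π => pairDist d (π • slot i) * pairDist d (π • slot j))
        = b + if i = j then a - b else 0 := by
    split_ifs with h
    · subst h
      simp only [← sq, add_sub_cancel]
      exact permExp_smul_embedding (fun g => pairDist d g ^ 2) (slot i)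
    · rw [add_zero]
      exact permExp_smul_embedding (pairDistProd d) (slotPair h)
  simp only [matchingSum_eq_sum_pairDist, sq, sum_mul_sum, permExp_sum, hterm, sum_add_distrib,
    sum_ite_eq, mem_univ, if_true, sum_const, card_univ, Fintype.card_fin, nsmul_eq_mul]
  ring

theorem permVar_matchingSum :
    permVar n (matchingSum n d)
      = (n / 2 : ℕ) * embMean (fun g => pairDist d g ^ 2)
        + (n / 2 : ℕ) * ((n / 2 : ℕ) - 1) * embMean (pairDistProd d)
        - ((n / 2 : ℕ) * embMean (pairDist d)) ^ 2 := by
  rw [permVar, permExp_matchingSum_sq, permExp_matchingSum]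

end Moments

section Bounds

variable {n : ℕ} {d : Fin n → Fin n → ℝ}

theorem embMean_pairDist_sq_le {Δ : ℝ} (hd : ∀ x y, 0 ≤ d x y) (hΔ : ∀ x y, d x y ≤ Δ) :
    embMean (fun g => pairDist d g ^ 2) ≤ Δ * embMean (pairDist d) := by
  rw [embMean, embMean, mul_div_assoc', mul_sum]
  gcongr with g
  rw [sq]
  exact mul_le_mul_of_nonneg_right (hΔ _ _) (hd _ _)

theorem embMean_pairDistProd_le (hd : ∀ x y, 0 ≤ d x y) :
    embMean (pairDistProd d)
      ≤ (∑ g : Fin 2 ↪ Fin n, pairDist d g) ^ 2 / Fintype.card (Fin 2 ⊕ Fin 2 ↪ Fin n) := by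
  rw [embMean, sq]
  gcongr
  exact sum_embedding_sum_le_mul (fun g => hd _ _) (fun g => hd _ _)

end Bounds

theorem variance_diagonal_bound {p m Δ P ρ : ℝ} (hp : 4 ≤ p) (hm : 2 * m ≤ p)
    (hΔ : 0 ≤ Δ) (hP₀ : 0 ≤ P) (hP : P ≤ p ^ 2 * ρ) :
    m * (Δ * (P / (p * (p - 1)))) ≤ 2 / 3 * p * Δ * ρ := by
  have hρ : 0 ≤ ρ := (mul_nonneg_iff_of_pos_left (by positivity)).1 (hP₀.trans hP)
  calc m * (Δ * (P / (p * (p - 1)))) ≤ p / 2 * (Δ * (p ^ 2 * ρ / (p * (p - 1)))) := by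
        have : 0 < p * (p - 1) := by nlinarith
        gcongr
        linarith
    _ = p * Δ * ρ * (p / (2 * (p - 1))) := by field_simp
    _ ≤ p * Δ * ρ * (2 / 3) := by
        refine mul_le_mul_of_nonneg_left ?_ (by positivity)
        rw [div_le_iff₀ (by linarith)]
        linarith
    _ = 2 / 3 * p * Δ * ρ := by ring

theorem variance_offDiagonal_bound {p m P ρ : ℝ} (hp : 4 ≤ p) (hm₁ : 1 ≤ m) (hm : 2 * m ≤ p)
    (hP₀ : 0 ≤ P) (hP : P ≤ p ^ 2 * ρ) :
    m * (m - 1) * (P ^ 2 / (p * (p - 1) * (p - 2) * (p - 3))) - (m * (P / (p * (p - 1)))) ^ 2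
      ≤ 9 * p * ρ ^ 2 := by
  have h₁ : 0 < p - 1 := by linarith
  have h₂ : 0 < p - 2 := by linarith
  have h₃ : 0 < p - 3 := by linarith
  -- Nearly tight at `p = 4` (640 ≤ 648): this is where the constant 9 comes from.
  have hpoly : p ^ 3 * (4 * p - 6) ≤ 36 * ((p - 1) ^ 2 * (p - 2) * (p - 3)) := by
    have hq : 0 ≤ p - 4 := by linarith
    nlinarith [pow_nonneg hq 2, pow_nonneg hq 3, pow_nonneg hq 4]
  calc m * (m - 1) * (P ^ 2 / (p * (p - 1) * (p - 2) * (p - 3))) - (m * (P / (p * (p - 1)))) ^ 2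
      ≤ m ^ 2 * (P ^ 2 / (p * (p - 1) * (p - 2) * (p - 3))) - (m * (P / (p * (p - 1)))) ^ 2 := by
        gcongr
        nlinarith
    _ = m ^ 2 * P ^ 2 * (4 * p - 6) / (p ^ 2 * ((p - 1) ^ 2 * (p - 2) * (p - 3))) := by
        field_simp
        ring
    _ ≤ (p / 2) ^ 2 * (p ^ 2 * ρ) ^ 2 * (4 * p - 6)
          / (p ^ 2 * ((p - 1) ^ 2 * (p - 2) * (p - 3))) := by
        gcongr
        · linarith
        · linarith
    _ = p * ρ ^ 2 / 4 * (p ^ 3 * (4 * p - 6)) / ((p - 1) ^ 2 * (p - 2) * (p - 3)) := by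
        field_simp
        ring
    _ ≤ p * ρ ^ 2 / 4 * (36 * ((p - 1) ^ 2 * (p - 2) * (p - 3)))
          / ((p - 1) ^ 2 * (p - 2) * (p - 3)) := by
        gcongr
    _ = 9 * p * ρ ^ 2 := by
        field_simp
        ring

noncomputable def meanDist {α : Type*} [Fintype α] (d : α → α → ℝ) : ℝ :=
  (∑ x, ∑ y, d x y) / Fintype.card α ^ 2

theorem permVar_matchingSum_le {n : ℕ} (hn : 4 ≤ n) {d : Fin n → Fin n → ℝ} {Δ : ℝ}
    (hd : ∀ x y, 0 ≤ d x y) (hΔ : ∀ x y, d x y ≤ Δ) :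
    permVar n (matchingSum n d) ≤ n * (9 * meanDist d ^ 2 + 2 / 3 * Δ * meanDist d) := by
  have hn' : (4 : ℝ) ≤ n := by exact_mod_cast hn
  have hm₁ : (1 : ℝ) ≤ (n / 2 : ℕ) := by exact_mod_cast (by omega : 1 ≤ n / 2)
  have hm : 2 * ((n / 2 : ℕ) : ℝ) ≤ n := by exact_mod_cast Nat.mul_div_le n 2
  have hΔ₀ : 0 ≤ Δ := (hd ⟨0, by omega⟩ ⟨0, by omega⟩).trans (hΔ _ _)
  have hP₀ : 0 ≤ ∑ g : Fin 2 ↪ Fin n, pairDist d g := sum_nonneg fun g _ => hd _ _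
  have hP : ∑ g : Fin 2 ↪ Fin n, pairDist d g ≤ (n : ℝ) ^ 2 * meanDist d := by
    rw [meanDist, Fintype.card_fin, mul_div_cancel₀ _ (by positivity)]
    exact sum_pairDist_le hd
  have hmean : embMean (pairDist d) = (∑ g, pairDist d g) / (n * (n - 1)) := by
    rw [embMean, card_embedding_fin_two]
  have hdiag := embMean_pairDist_sq_le hd hΔ
  have hoff := embMean_pairDistProd_le hd
  rw [hmean] at hdiag
  rw [card_embedding_fin_two_sum_fin_two] at hoff
  rw [permVar_matchingSum, hmean]
  calc _ ≤ (n / 2 : ℕ) * (Δ * ((∑ g, pairDist d g) / (n * (n - 1))))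
        + ((n / 2 : ℕ) * ((n / 2 : ℕ) - 1)
            * ((∑ g, pairDist d g) ^ 2 / (n * (n - 1) * (n - 2) * (n - 3)))
          - ((n / 2 : ℕ) * ((∑ g, pairDist d g) / (n * (n - 1)))) ^ 2) := by
        rw [add_sub_assoc']
        gcongr
    _ ≤ 2 / 3 * n * Δ * meanDist d + 9 * n * meanDist d ^ 2 :=
        add_le_add (variance_diagonal_bound hn' hm hΔ₀ hP₀ hP)
          (variance_offDiagonal_bound hn' hm₁ hm hP₀ hP)
    _ = n * (9 * meanDist d ^ 2 + 2 / 3 * Δ * meanDist d) := by ring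

theorem stmt19_general (n : ℕ) (hn : 4 ≤ n) (d : Fin n → Fin n → ℝ)
    (hnn : ∀ x y, 0 ≤ d x y)
    (r rbar : ℝ)
    (hrbar : rbar = (1 / (n : ℝ) ^ 2) * ∑ x : Fin n, ∑ y : Fin n, d x y)
    (δ : ℝ)
    (hdiam : ∀ x y : Fin n, d x y ≤ δ * (n : ℝ) * r) :
    permVar n (matchingSum n d)
      ≤ 10 * (rbar ^ 2 * (n : ℝ) + δ * (n : ℝ) ^ 2 * r * rbar + δ ^ 2 * (n : ℝ) * r ^ 2) := by
  have hrbar' : rbar = meanDist d := by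
    rw [hrbar, meanDist, Fintype.card_fin, one_div_mul_eq_div]
  have hn₀ : (0 : ℝ) ≤ n := n.cast_nonneg
  have hΔ : 0 ≤ δ * n * r := (hnn ⟨0, by omega⟩ ⟨0, by omega⟩).trans (hdiam _ _)
  have hρ : 0 ≤ rbar := by
    rw [hrbar]
    exact mul_nonneg (by positivity) (sum_nonneg fun x _ => sum_nonneg fun y _ => hnn x y)
  calc permVar n (matchingSum n d) ≤ n * (9 * rbar ^ 2 + 2 / 3 * (δ * n * r) * rbar) :=
        hrbar' ▸ permVar_matchingSum_le hn hnn hdiam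
    _ ≤ _ := by
        nlinarith [mul_nonneg (mul_nonneg hn₀ hΔ) hρ, mul_nonneg hn₀ (sq_nonneg (δ * r)),
          mul_nonneg hn₀ (sq_nonneg rbar)]

theorem stmt19 (n : ℕ) (hn : 4 ≤ n) (d : Fin n → Fin n → ℝ)
    (hnn : ∀ x y, 0 ≤ d x y)
    (hid : ∀ x y, d x y = 0 ↔ x = y)
    (hsymm : ∀ x y, d x y = d y x)
    (htri : ∀ x y z, d x z ≤ d x y + d y z)
    (pstar : Fin n) (hp : ∀ y : Fin n, ∑ x : Fin n, d pstar x ≤ ∑ x : Fin n, d y x)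
    (r rbar : ℝ)
    (hr : r = (1 / (n : ℝ)) * ∑ x : Fin n, d pstar x)
    (hrbar : rbar = (1 / (n : ℝ) ^ 2) * ∑ x : Fin n, ∑ y : Fin n, d x y)
    (δ : ℝ) (hδ : 0 < δ)
    (hdiam : ∀ x y : Fin n, d x y ≤ δ * (n : ℝ) * r) :
    permVar n (matchingSum n d)
      ≤ 10 * (rbar ^ 2 * (n : ℝ) + δ * (n : ℝ) ^ 2 * r * rbar + δ ^ 2 * (n : ℝ) * r ^ 2) :=
  stmt19_general n hn d hnn r rbar hrbar δ hdiam
end
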